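/- Let (a_n)_{n≥0} be complex coefficients such that ρ^{-1} := limsup_{n→∞} (e/(2n)) |a_n|^{1/n} satisfies 0 < ρ^{-1} < ∞. Then for every z ∈ ℂ with |z| > ρ, the Neumann series Σ_{n=0}^∞ a_n J_n(z) diverges, i.e. the sequence of partial sums Σ_{k=0}^n a_k J_k(z) does not converge. -/

import Mathlib

/-!
For large `n` the power series of `J_n(z)` is dominated by its first term, so
`|J_n(z)| ≥ (|z|/2)^n / (2 n!)`, and Stirling's bound `n! ≤ e √n (n/e)^n` turns this into
`|J_n(z)| ≥ (e|z|/(2n))^n / (2e√n)`. Choosing `ρ < c < |z|`, the limsup hypothesis gives infinitely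
many `n` with `|a_n| > (2n/(ec))^n`, and for those `|a_n J_n(z)| ≥ (|z|/c)^n / (2e√n) ≥ 1`.
So the terms of the Neumann series do not tend to zero, and its partial sums cannot converge.
-/

open Filter Topology

/-- Bessel function of the first kind of integer order `n`, defined by its power series. -/
noncomputable def besselJ (n : ℕ) (z : ℂ) : ℂ :=
  ∑' k : ℕ, ((-1 : ℂ) ^ k / ((k.factorial : ℂ) * ((n + k).factorial : ℂ))) * (z / 2) ^ (n + 2 * k)

open Real Nat

lemma factorial_le_exp_one_mul_sqrt_mul_pow {n : ℕ} (hn : n ≠ 0) :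
    (n ! : ℝ) ≤ exp 1 * √n * (n / exp 1) ^ n := by
  -- `stirlingSeq` decreases from its value `e / √2` at `n = 1`.
  have h : Stirling.stirlingSeq n ≤ exp 1 / √2 := by
    obtain ⟨m, rfl⟩ := Nat.exists_eq_succ_of_ne_zero hn
    simpa [Stirling.stirlingSeq_one] using Stirling.stirlingSeq'_antitone (Nat.zero_le m)
  have : exp 1 * √n * (n / exp 1) ^ n = exp 1 / √2 * (√(2 * n) * (n / exp 1) ^ n) := by
    rw [sqrt_mul zero_le_two]
    field_simp
  rw [this, ← div_le_iff₀ (by positivity)]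
  exact h

lemma tendsto_atTop_zero_of_tendsto_sum_range_succ {G : Type*} [AddCommGroup G]
    [TopologicalSpace G] [IsTopologicalAddGroup G] {f : ℕ → G} {L : G}
    (h : Tendsto (fun n => ∑ k ∈ Finset.range (n + 1), f k) atTop (𝓝 L)) :
    Tendsto f atTop (𝓝 0) := by
  have hsucc : Tendsto (fun n => f (n + 1)) atTop (𝓝 0) := by
    simpa [Finset.sum_range_succ] using (h.comp (tendsto_add_atTop_nat 1)).sub h
  exact (tendsto_add_atTop_iff_nat 1).mp hsucc

lemma eventually_mul_le_pow {q : ℝ} (hq : 1 < q) (C : ℝ) :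
    ∀ᶠ n : ℕ in atTop, C * n ≤ q ^ n := by
  filter_upwards [((isLittleO_coe_const_pow_of_one_lt hq).const_mul_left C).bound one_pos]
    with n hn
  simpa [abs_of_pos (zero_lt_one.trans hq)] using (le_abs_self _).trans hn

noncomputable def besselJTerm (n : ℕ) (z : ℂ) (k : ℕ) : ℂ :=
  ((-1 : ℂ) ^ k / ((k ! : ℂ) * ((n + k)! : ℂ))) * (z / 2) ^ (n + 2 * k)

lemma besselJ_eq_tsum_besselJTerm (n : ℕ) (z : ℂ) : besselJ n z = ∑' k, besselJTerm n z k := rfl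

lemma besselJTerm_zero (n : ℕ) (z : ℂ) : besselJTerm n z 0 = (z / 2) ^ n / n ! := by
  simp [besselJTerm, div_eq_inv_mul]

lemma norm_besselJTerm_le {n m k : ℕ} (hmk : m ≤ k) (z : ℂ) :
    ‖besselJTerm n z k‖ ≤ (‖z‖ / 2) ^ n / (n + m)! * (((‖z‖ / 2) ^ 2) ^ k / k !) := by
  have hnorm : ‖besselJTerm n z k‖ = (‖z‖ / 2) ^ n / (n + k)! * (((‖z‖ / 2) ^ 2) ^ k / k !) := by
    simp only [besselJTerm, pow_add, pow_mul, norm_mul, norm_div, norm_pow, norm_neg, norm_one,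
      one_pow, Complex.norm_natCast, Complex.norm_two]
    ring
  rw [hnorm]
  gcongr

lemma norm_besselJ_sub_le (n : ℕ) (z : ℂ) :
    ‖besselJ n z - (z / 2) ^ n / (n ! : ℂ)‖
      ≤ (‖z‖ / 2) ^ n / (n + 1)! * (exp ((‖z‖ / 2) ^ 2) - 1) := by
  set w := (‖z‖ / 2) ^ 2
  have hexp : HasSum (fun k => w ^ k / k !) (exp w) := by
    rw [exp_eq_exp_ℝ]
    exact NormedSpace.expSeries_div_hasSum_exp w
  have htail : HasSum (fun k => w ^ (k + 1) / (k + 1)!) (exp w - 1) := by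
    simpa using (hasSum_nat_add_iff' 1).2 hexp
  have hsumm : Summable (besselJTerm n z) :=
    .of_norm_bounded (hexp.summable.mul_left _) fun k => norm_besselJTerm_le (Nat.zero_le k) z
  rw [besselJ_eq_tsum_besselJTerm, hsumm.tsum_eq_zero_add, besselJTerm_zero, add_sub_cancel_left]
  exact tsum_of_norm_bounded (htail.mul_left _) fun k => norm_besselJTerm_le (by omega) z

lemma eventually_pow_div_le_norm_besselJ (z : ℂ) :
    ∀ᶠ n : ℕ in atTop, (‖z‖ / 2) ^ n / (2 * n !) ≤ ‖besselJ n z‖ := by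
  set E := exp ((‖z‖ / 2) ^ 2) - 1
  filter_upwards [eventually_ge_atTop ⌈2 * E⌉₊] with n hn
  have hE : 2 * E ≤ n + 1 := by linarith [Nat.ceil_le.1 hn]
  have htail : (‖z‖ / 2) ^ n / (n + 1)! * E ≤ (‖z‖ / 2) ^ n / (2 * n !) :=
    calc (‖z‖ / 2) ^ n / (n + 1)! * E = (‖z‖ / 2) ^ n / (2 * n !) * (2 * E / (n + 1)) := by
          rw [Nat.factorial_succ]
          push_cast
          field_simp
      _ ≤ (‖z‖ / 2) ^ n / (2 * n !) :=
          mul_le_of_le_one_right (by positivity) ((div_le_one (by positivity)).2 hE)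
  have hlead : ‖(z / 2) ^ n / (n ! : ℂ)‖ = 2 * ((‖z‖ / 2) ^ n / (2 * n !)) := by
    simp only [norm_div, norm_pow, Complex.norm_two, Complex.norm_natCast]
    field_simp
  linarith [norm_besselJ_sub_le n z, norm_sub_norm_le ((z / 2) ^ n / (n ! : ℂ)) (besselJ n z),
    norm_sub_rev ((z / 2) ^ n / (n ! : ℂ)) (besselJ n z)]

lemma eventually_pow_div_sqrt_le_norm_besselJ (z : ℂ) :
    ∀ᶠ n : ℕ in atTop, (exp 1 * ‖z‖ / (2 * n)) ^ n / (2 * exp 1 * √n) ≤ ‖besselJ n z‖ := by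
  filter_upwards [eventually_pow_div_le_norm_besselJ z, eventually_ne_atTop 0] with n hJ hn
  refine le_trans ?_ hJ
  calc (exp 1 * ‖z‖ / (2 * n)) ^ n / (2 * exp 1 * √n)
      = (‖z‖ / 2) ^ n / (2 * (exp 1 * √n * (n / exp 1) ^ n)) := by
        simp only [div_pow, mul_pow]
        field_simp
    _ ≤ (‖z‖ / 2) ^ n / (2 * n !) := by
        gcongr
        exact factorial_le_exp_one_mul_sqrt_mul_pow hn

lemma frequently_pow_lt_norm_of_inv_lt_limsup {a : ℕ → ℂ} {c : ℝ} (hc : 0 < c)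
    (h : c⁻¹ < limsup (fun n : ℕ => (exp 1 / (2 * n)) * ‖a n‖ ^ ((n : ℝ)⁻¹)) atTop) :
    ∃ᶠ n : ℕ in atTop, (2 * n / (exp 1 * c)) ^ n < ‖a n‖ := by
  have hcob : IsCoboundedUnder (· ≤ ·) atTop
      (fun n : ℕ => (exp 1 / (2 * n)) * ‖a n‖ ^ ((n : ℝ)⁻¹)) :=
    isCoboundedUnder_le_of_le atTop fun n => by positivity
  refine ((frequently_lt_of_lt_limsup hcob h).and_eventually (eventually_ne_atTop 0)).mono ?_
  rintro n ⟨hn, hn0⟩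
  have hroot : 2 * n / (exp 1 * c) < ‖a n‖ ^ ((n : ℝ)⁻¹) := by
    rw [inv_lt_iff_one_lt_mul₀ hc, show ∀ X : ℝ, exp 1 / (2 * n) * X * c
      = X * (exp 1 * c) / (2 * n) by intro X; ring, one_lt_div (by positivity)] at hn
    rwa [div_lt_iff₀ (by positivity)]
  have := (lt_rpow_inv_iff_of_pos (by positivity) (norm_nonneg _) (by positivity)).1 hroot
  exact_mod_cast this

/-- a Neumann series with convergence level `ρ`, `0 < ρ⁻¹ < ∞`, diverges at
every point `|z| > ρ`. -/
theorem stmt_11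
    (a : ℕ → ℂ) (ρ : ℝ) (hρ : 0 < ρ)
    (hcc : limsup (fun n : ℕ =>
        (Real.exp 1 / (2 * n)) * ‖a n‖ ^ ((n : ℝ)⁻¹)) atTop = ρ⁻¹)
    (z : ℂ) (hz : ρ < ‖z‖) :
    ¬ ∃ L : ℂ, Tendsto (fun n : ℕ => ∑ k ∈ Finset.range (n + 1), a k * besselJ k z)
      atTop (𝓝 L) := by
  rintro ⟨L, hL⟩
  obtain ⟨c, hρc, hcz⟩ := exists_between hz
  have hc : 0 < c := hρ.trans hρc
  have hcoef := frequently_pow_lt_norm_of_inv_lt_limsup hc (hcc ▸ inv_strictAnti₀ hρ hρc)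
  have hsmall : ∀ᶠ n in atTop, ‖a n * besselJ n z‖ < 1 :=
    (tendsto_zero_iff_norm_tendsto_zero.1
      (tendsto_atTop_zero_of_tendsto_sum_range_succ hL)).eventually (gt_mem_nhds one_pos)
  obtain ⟨n, ha, hsmall, hJ, hgrowth, hn⟩ := (hcoef.and_eventually (hsmall.and
    ((eventually_pow_div_sqrt_le_norm_besselJ z).and
    ((eventually_mul_le_pow ((one_lt_div hc).2 hcz) (2 * exp 1)).and
    (eventually_ne_atTop 0))))).exists
  refine hsmall.not_ge ?_
  calc 1 ≤ (‖z‖ / c) ^ n / (2 * exp 1 * √n) := by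
        rw [one_le_div (by positivity)]
        refine le_trans ?_ hgrowth
        gcongr
        exact sqrt_le_self_iff.2 (Or.inr (by exact_mod_cast Nat.one_le_iff_ne_zero.2 hn))
    _ = (2 * n / (exp 1 * c)) ^ n * ((exp 1 * ‖z‖ / (2 * n)) ^ n / (2 * exp 1 * √n)) := by
        rw [← mul_div_assoc, ← mul_pow]
        congr 2
        field_simp
    _ ≤ ‖a n‖ * ‖besselJ n z‖ := by gcongr
    _ = ‖a n * besselJ n z‖ := (norm_mul _ _).symm
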